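/- Let x be a standard normal random variable and b a real number. Then the variance of sin(b·x) is (1 - e^{-2b²})/2. -/

import Mathlib

/-!
Since `sin² (b x) = (1 - cos (2 b x)) / 2`, the variance of `sin (b x)` under any probability
measure is `(1 - Re φ(2b)) / 2 - (Im φ(b))²`, where `φ` is the characteristic function. For the
centred Gaussian `φ(t) = e^{-t²/2}` is real, which gives `(1 - e^{-2b²}) / 2`.
-/

open MeasureTheory ProbabilityTheory Real Complex

section charFun

variable {μ : Measure ℝ} [IsFiniteMeasure μ]

lemma integrable_cexp_mul_I (t : ℝ) : Integrable (fun x : ℝ => cexp (t * x * I)) μ :=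
  .of_bound (by fun_prop) 1 (ae_of_all _ fun x => by
    rw [← ofReal_mul, norm_exp_ofReal_mul_I])

lemma integral_cos_mul_eq_re_charFun (t : ℝ) :
    ∫ x, Real.cos (t * x) ∂μ = (charFun μ t).re := by
  rw [charFun_apply_real, ← RCLike.re_to_complex, ← integral_re (integrable_cexp_mul_I t)]
  simp_rw [← ofReal_mul, RCLike.re_to_complex, exp_ofReal_mul_I_re]

lemma integral_sin_mul_eq_im_charFun (t : ℝ) :
    ∫ x, Real.sin (t * x) ∂μ = (charFun μ t).im := by
  rw [charFun_apply_real, ← RCLike.im_to_complex, ← integral_im (integrable_cexp_mul_I t)]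
  simp_rw [← ofReal_mul, RCLike.im_to_complex, exp_ofReal_mul_I_im]

end charFun

lemma variance_sin_mul {μ : Measure ℝ} [IsProbabilityMeasure μ] (b : ℝ) :
    variance (fun x => Real.sin (b * x)) μ
      = (1 - (charFun μ (2 * b)).re) / 2 - (charFun μ b).im ^ 2 := by
  have hsin : MemLp (fun x => Real.sin (b * x)) 2 μ :=
    .of_bound (by fun_prop) 1 (ae_of_all _ fun x => by simpa using abs_sin_le_one (b * x))
  have hcos : Integrable (fun x => Real.cos (2 * b * x)) μ :=
    .of_bound (by fun_prop) 1 (ae_of_all _ fun x => by simpa using abs_cos_le_one (2 * b * x))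
  have hsq : (fun x => Real.sin (b * x)) ^ 2 = fun x => (1 - Real.cos (2 * b * x)) / 2 := by
    ext x
    rw [Pi.pow_apply, sin_sq_eq_half_sub, mul_assoc]
    ring
  rw [variance_eq_sub hsin, hsq, integral_div, integral_sub (integrable_const 1) hcos,
    integral_const, probReal_univ, one_smul, integral_cos_mul_eq_re_charFun,
    integral_sin_mul_eq_im_charFun]

lemma charFun_gaussianReal_zero (v : NNReal) (t : ℝ) :
    charFun (gaussianReal 0 v) t = ↑(rexp (-(v * t ^ 2 / 2))) := by
  rw [charFun_gaussianReal]
  push_cast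
  ring_nf

/-- Variance of `sin (b * x)` for `x` standard normal is `(1 - e^{-2b²})/2`. -/
theorem variance_sin_gaussian (b : ℝ) :
    variance (fun x => Real.sin (b * x)) (gaussianReal 0 1)
      = (1 - Real.exp (-2 * b ^ 2)) / 2 := by
  rw [variance_sin_mul, charFun_gaussianReal_zero, charFun_gaussianReal_zero, ofReal_re,
    ofReal_im, NNReal.coe_one]
  ring_nf
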